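/- Let m ≥ 2 and let P_2 × P_m be the direct (tensor) product of the path P_2 = [u_1, u_2] with the path P_m = [v_1, ..., v_m] (a graph of order 2m, which is a disjoint union of two paths of order m). Then for each i ∈ {1,2}, the harmonic centrality of the vertex (u_i, v_j) equals H_{m-1}/(2m-1) if j = 1 or j = m, and equals (H_{j-1} + H_{m-j})/(2m-1) if 1 < j < m, where H_n denotes the n-th harmonic number. -/

import Mathlib

open SimpleGraph Finset

/-- The harmonic centrality of a vertex `u` in a graph `G` of order `N`:
`(1/(N-1)) * Σ_{x ≠ u} 1/d(u,x)`, where `1/d(u,x) = 0` when there is no path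
(Mathlib's `SimpleGraph.dist` is `0` for unreachable pairs, and `1/0 = 0` in `ℝ`). -/
noncomputable def harmonicCentrality {V : Type*} [Fintype V] [DecidableEq V]
    (G : SimpleGraph V) (u : V) : ℝ :=
  (∑ x ∈ Finset.univ.erase u, (1 : ℝ) / (G.dist u x)) / ((Fintype.card V : ℝ) - 1)

/-- The harmonic centralization of a graph `G` of order `N`:
`(Σ_u (Hmax - H_G(u))) / ((N-2)/2)` where `Hmax` is the largest harmonic centrality. -/
noncomputable def harmonicCentralization {V : Type*} [Fintype V] [DecidableEq V]
    (G : SimpleGraph V) : ℝ :=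
  (∑ u : V, ((⨆ v : V, harmonicCentrality G v) - harmonicCentrality G u)) /
    (((Fintype.card V : ℝ) - 2) / 2)

/-- The fan graph `F_m`: the join of a hub vertex (`none`) with the path `P_m`. -/
def fanGraph (m : ℕ) : SimpleGraph (Option (Fin m)) :=
  SimpleGraph.fromRel (fun x y =>
    x = none ∨ ∃ a b : Fin m, x = some a ∧ y = some b ∧ (SimpleGraph.pathGraph m).Adj a b)

/-- The direct (tensor) product of two simple graphs. -/
def tensorProd {α β : Type*} (G : SimpleGraph α) (H : SimpleGraph β) :
    SimpleGraph (α × β) where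
  Adj x y := G.Adj x.1 y.1 ∧ H.Adj x.2 y.2
  symm := ⟨fun x y h => ⟨h.1.symm, h.2.symm⟩⟩
  loopless := ⟨fun x h => G.loopless.irrefl x.1 h.1⟩

section Aux

private lemma tp_adj {m : ℕ} {x y : Fin 2 × Fin m} :
    (tensorProd (pathGraph 2) (pathGraph m)).Adj x y ↔
      (((x.1 : ℕ) + 1 = y.1 ∨ (y.1 : ℕ) + 1 = x.1) ∧
       ((x.2 : ℕ) + 1 = y.2 ∨ (y.2 : ℕ) + 1 = x.2)) := by
  constructor
  · rintro ⟨h1, h2⟩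
    exact ⟨pathGraph_adj.mp h1, pathGraph_adj.mp h2⟩
  · rintro ⟨h1, h2⟩
    exact ⟨pathGraph_adj.mpr h1, pathGraph_adj.mpr h2⟩

private lemma tp_parity {m : ℕ} {x y : Fin 2 × Fin m}
    (h : (tensorProd (pathGraph 2) (pathGraph m)).Reachable x y) :
    ((x.1 : ℕ) + (x.2 : ℕ)) % 2 = ((y.1 : ℕ) + (y.2 : ℕ)) % 2 := by
  obtain ⟨w⟩ := h
  induction w with
  | nil => rfl
  | cons h p ih =>
    obtain ⟨h1, h2⟩ := tp_adj.mp h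
    omega

private lemma tp_len {m : ℕ} {x y : Fin 2 × Fin m}
    (w : (tensorProd (pathGraph 2) (pathGraph m)).Walk x y) :
    (((x.2 : ℕ) : ℤ) - ((y.2 : ℕ) : ℤ)).natAbs ≤ w.length := by
  induction w with
  | nil => simp
  | cons h p ih =>
    obtain ⟨h1, h2⟩ := tp_adj.mp h
    rw [SimpleGraph.Walk.length_cons]
    omega

private lemma tp_walk {m : ℕ} : ∀ (n i a i' b : ℕ) (hi : i < 2) (ha : a < m)
    (hi' : i' < 2) (hb : b < m), (a + n = b ∨ b + n = a) →
    (i + a) % 2 = (i' + b) % 2 →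
    ∃ w : (tensorProd (pathGraph 2) (pathGraph m)).Walk
        (⟨i, hi⟩, ⟨a, ha⟩) (⟨i', hi'⟩, ⟨b, hb⟩),
      w.length = n := by
  intro n
  induction n with
  | zero =>
    intro i a i' b hi ha hi' hb hd hp
    have hab : a = b := by omega
    have hii : i = i' := by omega
    subst hab; subst hii
    exact ⟨SimpleGraph.Walk.nil, rfl⟩
  | succ n ih =>
    intro i a i' b hi ha hi' hb hd hp
    rcases hd with hd | hd
    · have hadj : (tensorProd (pathGraph 2) (pathGraph m)).Adj (⟨i, hi⟩, ⟨a, ha⟩)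
          (⟨1 - i, by omega⟩, ⟨a + 1, by omega⟩) := by
        rw [tp_adj]; constructor <;> simp <;> omega
      obtain ⟨w, hw⟩ := ih (1 - i) (a + 1) i' b (by omega) (by omega) hi' hb
        (by omega) (by omega)
      exact ⟨SimpleGraph.Walk.cons hadj w, by simp [hw]⟩
    · have hadj : (tensorProd (pathGraph 2) (pathGraph m)).Adj (⟨i, hi⟩, ⟨a, ha⟩)
          (⟨1 - i, by omega⟩, ⟨a - 1, by omega⟩) := by
        rw [tp_adj]; constructor <;> simp <;> omega
      obtain ⟨w, hw⟩ := ih (1 - i) (a - 1) i' b (by omega) (by omega) hi' hb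
        (by omega) (by omega)
      exact ⟨SimpleGraph.Walk.cons hadj w, by simp [hw]⟩

private lemma tp_dist {m : ℕ} (u v : Fin 2 × Fin m)
    (hp : ((u.1 : ℕ) + (u.2 : ℕ)) % 2 = ((v.1 : ℕ) + (v.2 : ℕ)) % 2) :
    (tensorProd (pathGraph 2) (pathGraph m)).dist u v
      = (((u.2 : ℕ) : ℤ) - ((v.2 : ℕ) : ℤ)).natAbs := by
  obtain ⟨⟨i, hi⟩, ⟨a, ha⟩⟩ := u
  obtain ⟨⟨i', hi'⟩, ⟨b, hb⟩⟩ := v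
  simp only at hp ⊢
  obtain ⟨w, hw⟩ := tp_walk (((a : ℤ) - b).natAbs) i a i' b hi ha hi' hb (by omega) hp
  refine le_antisymm (hw ▸ SimpleGraph.dist_le w) ?_
  obtain ⟨p, hp'⟩ := SimpleGraph.Reachable.exists_walk_length_eq_dist ⟨w⟩
  exact hp' ▸ tp_len p

private lemma tp_dist_zero {m : ℕ} {x y : Fin 2 × Fin m}
    (hp : ((x.1 : ℕ) + (x.2 : ℕ)) % 2 ≠ ((y.1 : ℕ) + (y.2 : ℕ)) % 2) :
    (tensorProd (pathGraph 2) (pathGraph m)).dist x y = 0 :=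
  SimpleGraph.dist_eq_zero_of_not_reachable (fun h => hp (tp_parity h))

private lemma harmonic_cast (n : ℕ) :
    (harmonic n : ℝ) = ∑ k ∈ Finset.range n, (1 : ℝ) / ((k : ℝ) + 1) := by
  rw [harmonic]
  push_cast
  refine Finset.sum_congr rfl fun k _ => ?_
  rw [one_div]

private lemma sum_inv_natAbs (a m : ℕ) (ha : a < m) :
    ∑ k ∈ Finset.range m, (1 : ℝ) / ((((a : ℤ) - k).natAbs : ℕ) : ℝ)
      = (harmonic a : ℝ) + (harmonic (m - 1 - a) : ℝ) := by
  set f : ℕ → ℝ := fun k => (1 : ℝ) / ((((a : ℤ) - k).natAbs : ℕ) : ℝ) with hf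
  have hsplit : ∑ k ∈ Finset.range m, f k
      = (∑ k ∈ Finset.range a, f k) + ∑ k ∈ Finset.Ico a m, f k := by
    rw [Finset.range_eq_Ico, Finset.range_eq_Ico]
    exact (Finset.sum_Ico_consecutive f (Nat.zero_le a) ha.le).symm
  rw [hsplit]
  congr 1
  · rw [← Finset.sum_range_reflect, harmonic_cast]
    refine Finset.sum_congr rfl fun k hk => ?_
    rw [Finset.mem_range] at hk
    have h1 : ((a : ℤ) - (a - 1 - k : ℕ)).natAbs = k + 1 := by omega
    simp only [hf]
    rw [h1]
    push_cast
    ring_nf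
  · rw [Finset.sum_Ico_eq_sum_range]
    have h2 : ∀ k, f (a + k) = (1 : ℝ) / (k : ℝ) := by
      intro k
      have : ((a : ℤ) - (a + k : ℕ)).natAbs = k := by omega
      rw [hf]
      simp only [this]
    simp only [h2]
    have hma : m - a = (m - 1 - a) + 1 := by omega
    rw [hma, Finset.sum_range_succ', harmonic_cast]
    simp only [Nat.cast_zero, div_zero, add_zero]
    refine Finset.sum_congr rfl fun k _ => ?_
    push_cast
    ring_nf

private lemma tp_sum (m : ℕ) (i : Fin 2) (a : ℕ) (ha : a < m) :
    ∑ x ∈ Finset.univ.erase ((i, ⟨a, ha⟩) : Fin 2 × Fin m),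
      (1 : ℝ) / ((tensorProd (pathGraph 2) (pathGraph m)).dist (i, ⟨a, ha⟩) x)
      = (harmonic a : ℝ) + (harmonic (m - 1 - a) : ℝ) := by
  rw [Finset.sum_erase _ (by simp)]
  rw [Fintype.sum_prod_type_right]
  have hstep : ∀ k : Fin m,
      (∑ i' : Fin 2, (1 : ℝ) /
        ((tensorProd (pathGraph 2) (pathGraph m)).dist (i, ⟨a, ha⟩) (i', k)))
      = (1 : ℝ) / ((((a : ℤ) - (k : ℕ)).natAbs : ℕ) : ℝ) := by
    intro k
    rw [Fin.sum_univ_two]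
    by_cases hpar : ((i : ℕ) + a) % 2 = (((0 : Fin 2) : ℕ) + (k : ℕ)) % 2
    · rw [tp_dist (i, ⟨a, ha⟩) ((0 : Fin 2), k) hpar,
        tp_dist_zero (x := (i, ⟨a, ha⟩)) (y := ((1 : Fin 2), k)) (by simp at hpar ⊢; omega)]
      simp
    · rw [tp_dist (i, ⟨a, ha⟩) ((1 : Fin 2), k) (by simp at hpar ⊢; omega),
        tp_dist_zero (x := (i, ⟨a, ha⟩)) (y := ((0 : Fin 2), k)) hpar]
      simp
  rw [Finset.sum_congr rfl fun k _ => hstep k]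
  rw [Fin.sum_univ_eq_sum_range (fun k => (1 : ℝ) / ((((a : ℤ) - k).natAbs : ℕ) : ℝ)) m]
  exact sum_inv_natAbs a m ha

end Aux

/-- Theorem 3.7: harmonic centrality of vertices of the direct product `P₂ × Pₘ`
(vertices are 1-indexed: vertex `v_j` of `Pₘ` is `⟨j-1, _⟩ : Fin m`). -/
theorem harmonicCentrality_tensorProd_path_path (m : ℕ) (hm : 2 ≤ m)
    (i : Fin 2) (j : ℕ) (hj1 : 1 ≤ j) (hjm : j ≤ m) :
    ((j = 1 ∨ j = m) →
      harmonicCentrality (tensorProd (SimpleGraph.pathGraph 2) (SimpleGraph.pathGraph m))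
        (i, ⟨j - 1, by omega⟩) =
      (harmonic (m - 1) : ℝ) / (2 * (m : ℝ) - 1)) ∧
    ((1 < j ∧ j < m) →
      harmonicCentrality (tensorProd (SimpleGraph.pathGraph 2) (SimpleGraph.pathGraph m))
        (i, ⟨j - 1, by omega⟩) =
      ((harmonic (j - 1) : ℝ) + (harmonic (m - j) : ℝ)) / (2 * (m : ℝ) - 1)) := by
  have hcard : ((Fintype.card (Fin 2 × Fin m) : ℝ) - 1) = 2 * (m : ℝ) - 1 := by
    rw [Fintype.card_prod, Fintype.card_fin, Fintype.card_fin]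
    push_cast
    ring
  have hkey : harmonicCentrality (tensorProd (SimpleGraph.pathGraph 2) (SimpleGraph.pathGraph m))
      (i, ⟨j - 1, by omega⟩) =
      ((harmonic (j - 1) : ℝ) + (harmonic (m - j) : ℝ)) / (2 * (m : ℝ) - 1) := by
    rw [harmonicCentrality, tp_sum m i (j - 1) (by omega), hcard]
    have : m - 1 - (j - 1) = m - j := by omega
    rw [this]
  constructor
  · rintro (rfl | rfl)
    · rw [hkey]
      norm_num
    · rw [hkey]
      simp [Nat.sub_self]
  · intro _
    exact hkey
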